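/- arXiv:1312.7418 — 2 statements merged into one kernel-verified Lean document; each statement's English description precedes it below -/
import Mathlib

section
/- Let G ⊂ Diff^1_+([0,1]) be a group C^1-close to the identity, witnessed by a sequence h_n with h_n g h_n^{-1} → id in C^1 for all g ∈ G. Let g ∈ G and let 𝓘 be a family of connected components of [0,1] ∖ Fix(g). Then the induced map g_𝓘 (equal to g on the components in 𝓘 and to the identity elsewhere) is a C^1 diffeomorphism of [0,1], and h_n g_𝓘 h_n^{-1} → id in the C^1 topology. -/
open Set Filter

noncomputable section

/-- `f` is an orientation-preserving C¹ diffeomorphism of `[0,1]`, modeled as a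
bijection of `ℝ` that equals the identity outside `[0,1]`. -/
def DiffOnIcc (f : Equiv.Perm ℝ) : Prop :=
  (∀ x : ℝ, x ∉ Icc (0:ℝ) 1 → f x = x) ∧
  MapsTo ⇑f (Icc (0:ℝ) 1) (Icc (0:ℝ) 1) ∧
  StrictMonoOn ⇑f (Icc (0:ℝ) 1) ∧
  ContDiffOn ℝ 1 ⇑f (Icc (0:ℝ) 1) ∧
  ContDiffOn ℝ 1 ⇑f.symm (Icc (0:ℝ) 1) ∧
  ∀ x ∈ Icc (0:ℝ) 1, 0 < derivWithin ⇑f (Icc (0:ℝ) 1) x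

/-- The derivative (within `[0,1]`) of a diffeomorphism of `[0,1]`. -/
def D (f : Equiv.Perm ℝ) (x : ℝ) : ℝ := derivWithin ⇑f (Icc (0:ℝ) 1) x

/-- `f` is an orientation-preserving homeomorphism of `[0,1]`, modeled as a
bijection of `ℝ` that equals the identity outside `[0,1]`. -/
def HomeoOnIcc (f : Equiv.Perm ℝ) : Prop :=
  (∀ x : ℝ, x ∉ Icc (0:ℝ) 1 → f x = x) ∧
  MapsTo ⇑f (Icc (0:ℝ) 1) (Icc (0:ℝ) 1) ∧
  StrictMonoOn ⇑f (Icc (0:ℝ) 1) ∧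
  ContinuousOn ⇑f (Icc (0:ℝ) 1)

/-- `(a,b)` is a connected component of `[0,1] \ Fix f`: `a`, `b` are fixed and
there is no fixed point in between. -/
def IsCompFix (f : Equiv.Perm ℝ) (a b : ℝ) : Prop :=
  a ∈ Icc (0:ℝ) 1 ∧ b ∈ Icc (0:ℝ) 1 ∧ a < b ∧ f a = a ∧ f b = b ∧
  ∀ x ∈ Ioo a b, f x ≠ x

/-- `{a,b}` is a pair of successive fixed points of the group `G`. -/
def SuccFix (G : Subgroup (Equiv.Perm ℝ)) (a b : ℝ) : Prop :=
  ∃ g ∈ G, IsCompFix g a b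

/-!
At a fixed point `a` of `g`, the derivative of `h g h⁻¹` at `h a` equals `D g a`, so
`C¹`-convergence of the conjugates to the identity forces `D g = 1` on `Fix g`. Hence
`g_𝓘 - id`, which is `g - id` on the components in `𝓘` and `0` elsewhere, is `C¹`: near a point
outside these components, the mean value theorem from the endpoint of a component, where
`g - id` and its derivative vanish, shows that `g_𝓘 - id` is `o(y - x)` with derivative tending
to `0`. Finally `h g_𝓘 h⁻¹` agrees, with its derivative, with `h g h⁻¹` at the points `x` with
`h⁻¹ x` in a component of `𝓘`, and with the identity at the others.
-/

open Function Topology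

local notation "𝕀" => Icc (0:ℝ) 1

namespace DiffOnIcc

variable {f g h : Equiv.Perm ℝ} {x : ℝ}

theorem mapsTo (hf : DiffOnIcc f) : MapsTo f 𝕀 𝕀 := hf.2.1

theorem strictMonoOn (hf : DiffOnIcc f) : StrictMonoOn f 𝕀 := hf.2.2.1

theorem contDiffOn (hf : DiffOnIcc f) : ContDiffOn ℝ 1 f 𝕀 := hf.2.2.2.1

theorem contDiffOn_symm (hf : DiffOnIcc f) : ContDiffOn ℝ 1 f.symm 𝕀 := hf.2.2.2.2.1

theorem D_pos (hf : DiffOnIcc f) (hx : x ∈ 𝕀) : 0 < D f x := hf.2.2.2.2.2 x hx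

theorem mapsTo_symm (hf : DiffOnIcc f) : MapsTo f.symm 𝕀 𝕀 := by
  intro y hy
  by_contra hy'
  have hfix := hf.1 _ hy'
  rw [Equiv.apply_symm_apply] at hfix
  exact hy' (hfix ▸ hy)

theorem symm_apply_of_notMem (hf : DiffOnIcc f) (hx : x ∉ 𝕀) : f.symm x = x := by
  have hx' : f.symm x ∉ 𝕀 := fun hmem => hx (by simpa using hf.mapsTo hmem)
  simpa using (hf.1 _ hx').symm

theorem hasDerivWithinAt (hf : DiffOnIcc f) (hx : x ∈ 𝕀) : HasDerivWithinAt f (D f x) 𝕀 x :=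
  (hf.contDiffOn.differentiableOn one_ne_zero x hx).hasDerivWithinAt

theorem D_symm_apply_mul_D (hf : DiffOnIcc f) (hx : x ∈ 𝕀) : D f.symm (f x) * D f x = 1 := by
  have hsymm : HasDerivWithinAt f.symm (D f.symm (f x)) 𝕀 (f x) :=
    (hf.contDiffOn_symm.differentiableOn one_ne_zero _ (hf.mapsTo hx)).hasDerivWithinAt
  have hid := hsymm.comp x (hf.hasDerivWithinAt hx) hf.mapsTo
  rw [show (f.symm ∘ f : ℝ → ℝ) = id from funext f.symm_apply_apply] at hid
  exact (hid.derivWithin (uniqueDiffOn_Icc one_pos x hx)).symm.trans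
    (derivWithin_id _ _ (uniqueDiffOn_Icc one_pos x hx))

theorem symm (hf : DiffOnIcc f) : DiffOnIcc f.symm := by
  refine ⟨fun x hx => hf.symm_apply_of_notMem hx, hf.mapsTo_symm, ?_, hf.contDiffOn_symm,
    hf.contDiffOn, fun y hy => ?_⟩
  · intro a ha b hb hab
    by_contra hba
    have := hf.strictMonoOn.monotoneOn (hf.mapsTo_symm hb) (hf.mapsTo_symm ha) (not_lt.1 hba)
    simp only [Equiv.apply_symm_apply] at this
    exact this.not_gt hab
  · have hprod := hf.D_symm_apply_mul_D (hf.mapsTo_symm hy)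
    rw [Equiv.apply_symm_apply] at hprod
    change 0 < D f.symm y
    rw [eq_inv_of_mul_eq_one_left hprod]
    exact inv_pos.2 (hf.D_pos (hf.mapsTo_symm hy))

theorem D_apply_symm_mul_D_symm (hf : DiffOnIcc f) (hx : x ∈ 𝕀) :
    D f (f.symm x) * D f.symm x = 1 := by
  simpa using hf.symm.D_symm_apply_mul_D hx

theorem D_mul (hf : DiffOnIcc f) (hg : DiffOnIcc g) (hx : x ∈ 𝕀) :
    D (f * g) x = D f (g x) * D g x :=
  ((hf.hasDerivWithinAt (hg.mapsTo hx)).comp x (hg.hasDerivWithinAt hx) hg.mapsTo).derivWithin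
    (uniqueDiffOn_Icc one_pos x hx)

theorem mul (hf : DiffOnIcc f) (hg : DiffOnIcc g) : DiffOnIcc (f * g) := by
  refine ⟨fun x hx => ?_, hf.mapsTo.comp hg.mapsTo, hf.strictMonoOn.comp hg.strictMonoOn hg.mapsTo,
    hf.contDiffOn.comp hg.contDiffOn hg.mapsTo,
    hg.contDiffOn_symm.comp hf.contDiffOn_symm hf.mapsTo_symm, fun x hx => ?_⟩
  · change f (g x) = x
    rw [hg.1 x hx, hf.1 x hx]
  · change 0 < D (f * g) x
    rw [hf.D_mul hg hx]
    exact mul_pos (hf.D_pos (hg.mapsTo hx)) (hg.D_pos hx)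

theorem D_conj (hh : DiffOnIcc h) (hg : DiffOnIcc g) (hx : x ∈ 𝕀) :
    D (h * g * h⁻¹) x = D h (g (h.symm x)) * D g (h.symm x) * D h.symm x := by
  have hinv : DiffOnIcc h⁻¹ := hh.symm
  rw [(hh.mul hg).D_mul hinv hx, Equiv.Perm.inv_def, hh.D_mul hg (hh.mapsTo_symm hx)]

/-- The derivative at a fixed point is a conjugacy invariant, so it can only tend to `1` along
the conjugates if it equals `1`. -/
theorem D_eq_one_of_isFixedPt (hg : DiffOnIcc g) {h : ℕ → Equiv.Perm ℝ}
    (hh : ∀ n, DiffOnIcc (h n))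
    (hconv : ∀ ε > (0:ℝ), ∃ N : ℕ, ∀ n ≥ N, ∀ x ∈ 𝕀, |D (h n * g * (h n)⁻¹) x - 1| < ε)
    {a : ℝ} (ha : a ∈ 𝕀) (hga : IsFixedPt g a) : D g a = 1 := by
  have hinv (n : ℕ) : D (h n * g * (h n)⁻¹) (h n a) = D g a := by
    rw [(hh n).D_conj hg ((hh n).mapsTo ha), Equiv.symm_apply_apply, hga.eq]
    linear_combination D g a * (hh n).D_symm_apply_mul_D ha
  by_contra hne
  obtain ⟨N, hN⟩ := hconv _ (abs_pos.2 (sub_ne_zero.2 hne))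
  simpa [hinv] using hN N le_rfl _ ((hh N).mapsTo ha)

end DiffOnIcc

theorem exists_isFixedPt_mem_uIcc_of_notMem_biUnion_Ioo {f : ℝ → ℝ} {J : Set (ℝ × ℝ)}
    (hJ : ∀ p ∈ J, IsFixedPt f p.1 ∧ IsFixedPt f p.2) {x y : ℝ}
    (hx : x ∉ ⋃ p ∈ J, Ioo p.1 p.2) (hy : y ∈ ⋃ p ∈ J, Ioo p.1 p.2) :
    ∃ e ∈ uIcc x y, IsFixedPt f e := by
  obtain ⟨p, hp, hyp⟩ := mem_iUnion₂.1 hy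
  have hxp : x ∉ Ioo p.1 p.2 := fun h => hx (mem_biUnion hp h)
  rcases le_or_gt x p.1 with hx1 | hx1
  · exact ⟨p.1, mem_uIcc.2 (Or.inl ⟨hx1, hyp.1.le⟩), (hJ p hp).1⟩
  · exact ⟨p.2, mem_uIcc.2 (Or.inr ⟨hyp.2.le, not_lt.1 fun hx2 => hxp ⟨hx1, hx2⟩⟩), (hJ p hp).2⟩

theorem strictMonoOn_of_eqOn_of_eqOn_compl {α : Type*} [LinearOrder α] {f k : α → α}
    {s U : Set α} (hs : s.OrdConnected) (hf : StrictMonoOn f s)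
    (hsep : ∀ x ∉ U, ∀ y ∈ U, ∃ e ∈ uIcc x y, IsFixedPt f e)
    (hkf : EqOn k f U) (hk : EqOn k id Uᶜ) : StrictMonoOn k s := by
  intro x hx y hy hxy
  by_cases hxU : x ∈ U <;> by_cases hyU : y ∈ U
  · rw [hkf hxU, hkf hyU]
    exact hf hx hy hxy
  · obtain ⟨e, he, hfe⟩ := hsep y hyU x hxU
    rw [uIcc_of_ge hxy.le] at he
    rw [hkf hxU, hk hyU, id]
    rcases he.1.eq_or_lt with rfl | hxe
    · exact hfe.eq.symm ▸ hxy
    · exact (hf hx (hs.out hx hy he) hxe).trans_le (hfe.eq.symm ▸ he.2)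
  · obtain ⟨e, he, hfe⟩ := hsep x hxU y hyU
    rw [uIcc_of_le hxy.le] at he
    rw [hk hxU, hkf hyU, id]
    rcases he.2.eq_or_lt with rfl | hey
    · exact hfe.eq.symm ▸ hxy
    · exact (hfe.eq ▸ he.1).trans_lt (hf (hs.out hx hy he) hy hey)
  · rw [hk hxU, hk hyU]
    exact hxy

theorem symm_eqOn_of_eqOn {f k : Equiv.Perm ℝ} {U : Set ℝ} (hU : MapsTo f.symm U U)
    (hkf : EqOn k f U) (hk : EqOn k id Uᶜ) : EqOn k.symm f.symm U ∧ EqOn k.symm id Uᶜ := by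
  refine ⟨fun x hx => ?_, fun x hx => ?_⟩
  · rw [k.symm_apply_eq, hkf (hU hx), Equiv.apply_symm_apply]
  · change k.symm x = x
    rw [k.symm_apply_eq, hk hx, id]

section Gluing

variable {f k : ℝ → ℝ} {U : Set ℝ} {x c : ℝ}

theorem abs_sub_sub_le_of_abs_derivWithin_sub_one_le (hf : DifferentiableOn ℝ f 𝕀)
    {a b : ℝ} (ha : a ∈ 𝕀) (hb : b ∈ 𝕀) (hc : ∀ z ∈ uIcc a b, |derivWithin f 𝕀 z - 1| ≤ c) :
    |(f b - b) - (f a - a)| ≤ c * |b - a| := by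
  have hsub : uIcc a b ⊆ 𝕀 := ordConnected_Icc.uIcc_subset ha hb
  have hder : ∀ z ∈ uIcc a b,
      HasDerivWithinAt (fun w => f w - w) (derivWithin f 𝕀 z - 1) (uIcc a b) z := fun z hz =>
    ((hf z (hsub hz)).hasDerivWithinAt.sub (hasDerivWithinAt_id z _)).mono hsub
  simpa only [Real.norm_eq_abs] using Convex.norm_image_sub_le_of_norm_hasDerivWithin_le hder
    (by simpa only [Real.norm_eq_abs] using hc) (convex_uIcc a b) left_mem_uIcc right_mem_uIcc

theorem eventually_abs_derivWithin_sub_one_lt (hf : ContDiffOn ℝ 1 f 𝕀)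
    (hfix : ∀ e ∈ 𝕀, IsFixedPt f e → derivWithin f 𝕀 e = 1)
    (hsep : ∀ x ∉ U, ∀ y ∈ U, ∃ e ∈ uIcc x y, IsFixedPt f e)
    (hx : x ∈ 𝕀) (hxU : x ∉ U) (hc : 0 < c) :
    ∀ᶠ y in 𝓝[𝕀] x, y ∈ U → ∀ z ∈ uIcc x y, |derivWithin f 𝕀 z - 1| < c := by
  obtain ⟨δ, hδ, hcont⟩ := Metric.continuousWithinAt_iff.1
    (hf.continuousOn_derivWithin (uniqueDiffOn_Icc one_pos) le_rfl x hx) (c / 2) (half_pos hc)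
  filter_upwards [self_mem_nhdsWithin, mem_nhdsWithin_of_mem_nhds (Metric.ball_mem_nhds x hδ)]
    with y hy hyx hyU z hz
  obtain ⟨e, he, hfe⟩ := hsep x hxU y hyU
  have hsub : uIcc x y ⊆ 𝕀 := ordConnected_Icc.uIcc_subset hx hy
  have hclose {w : ℝ} (hw : w ∈ uIcc x y) : |derivWithin f 𝕀 w - derivWithin f 𝕀 x| < c / 2 :=
    hcont (hsub hw) ((abs_sub_left_of_mem_uIcc hw).trans_lt hyx)
  have hex := hclose he
  rw [hfix e (hsub he) hfe, abs_sub_comm] at hex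
  calc |derivWithin f 𝕀 z - 1|
      ≤ |derivWithin f 𝕀 z - derivWithin f 𝕀 x| + |derivWithin f 𝕀 x - 1| := abs_sub_le _ _ _
    _ < c / 2 + c / 2 := add_lt_add (hclose hz) hex
    _ = c := add_halves c

/-- On `U`, `k - id = f - id` vanishes at a fixed point separating `y` from `x` and has small
derivative in between, so it is `o(y - x)`. -/
theorem hasDerivWithinAt_one_of_notMem (hf : ContDiffOn ℝ 1 f 𝕀)
    (hfix : ∀ e ∈ 𝕀, IsFixedPt f e → derivWithin f 𝕀 e = 1)
    (hsep : ∀ x ∉ U, ∀ y ∈ U, ∃ e ∈ uIcc x y, IsFixedPt f e)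
    (hkf : EqOn k f U) (hk : EqOn k id Uᶜ) (hx : x ∈ 𝕀) (hxU : x ∉ U) :
    HasDerivWithinAt k 1 𝕀 x := by
  rw [hasDerivWithinAt_iff_isLittleO, Asymptotics.isLittleO_iff]
  intro c hc
  filter_upwards [eventually_abs_derivWithin_sub_one_lt hf hfix hsep hx hxU hc,
    self_mem_nhdsWithin] with y hclose hy
  rw [hk hxU, id, smul_eq_mul, mul_one, Real.norm_eq_abs, Real.norm_eq_abs]
  by_cases hyU : y ∈ U
  · obtain ⟨e, he, hfe⟩ := hsep x hxU y hyU
    have hmvt := abs_sub_sub_le_of_abs_derivWithin_sub_one_le (hf.differentiableOn one_ne_zero)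
      (ordConnected_Icc.uIcc_subset hx hy he) hy
      fun z hz => (hclose hyU z (uIcc_subset_uIcc he right_mem_uIcc hz)).le
    rw [hfe.eq, sub_self, sub_zero] at hmvt
    calc |k y - x - (y - x)| = |f y - y| := by rw [hkf hyU]; ring_nf
      _ ≤ c * |y - e| := hmvt
      _ ≤ c * |y - x| := mul_le_mul_of_nonneg_left (abs_sub_right_of_mem_uIcc he) hc.le
  · rw [hk hyU, id, sub_self, abs_zero]
    positivity

open Classical in
theorem hasDerivWithinAt_ite (hf : ContDiffOn ℝ 1 f 𝕀)
    (hfix : ∀ e ∈ 𝕀, IsFixedPt f e → derivWithin f 𝕀 e = 1)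
    (hsep : ∀ x ∉ U, ∀ y ∈ U, ∃ e ∈ uIcc x y, IsFixedPt f e) (hU : IsOpen U)
    (hkf : EqOn k f U) (hk : EqOn k id Uᶜ) (hx : x ∈ 𝕀) :
    HasDerivWithinAt k (if x ∈ U then derivWithin f 𝕀 x else 1) 𝕀 x := by
  by_cases hxU : x ∈ U
  · rw [if_pos hxU]
    exact (hf.differentiableOn one_ne_zero x hx).hasDerivWithinAt.congr_of_eventuallyEq
      (eventually_nhdsWithin_of_eventually_nhds (hU.eventually_mem hxU) |>.mono fun y hy => hkf hy)
      (hkf hxU)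
  · rw [if_neg hxU]
    exact hasDerivWithinAt_one_of_notMem hf hfix hsep hkf hk hx hxU

open Classical in
theorem continuousOn_ite_derivWithin (hf : ContDiffOn ℝ 1 f 𝕀)
    (hfix : ∀ e ∈ 𝕀, IsFixedPt f e → derivWithin f 𝕀 e = 1)
    (hsep : ∀ x ∉ U, ∀ y ∈ U, ∃ e ∈ uIcc x y, IsFixedPt f e) (hU : IsOpen U) :
    ContinuousOn (fun x => if x ∈ U then derivWithin f 𝕀 x else 1) 𝕀 := by
  intro x hx
  by_cases hxU : x ∈ U
  · exact (hf.continuousOn_derivWithin (uniqueDiffOn_Icc one_pos) le_rfl x hx).congr_of_eventuallyEq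
      (eventually_nhdsWithin_of_eventually_nhds (hU.eventually_mem hxU) |>.mono
        fun y hy => if_pos hy) (if_pos hxU)
  · rw [ContinuousWithinAt, if_neg hxU, Metric.tendsto_nhds]
    intro c hc
    filter_upwards [eventually_abs_derivWithin_sub_one_lt hf hfix hsep hx hxU hc] with y hy
    by_cases hyU : y ∈ U
    · rw [if_pos hyU, Real.dist_eq]
      exact hy hyU y right_mem_uIcc
    · simpa [hyU] using hc

theorem contDiffOn_of_eqOn_of_eqOn_compl (hf : ContDiffOn ℝ 1 f 𝕀)
    (hfix : ∀ e ∈ 𝕀, IsFixedPt f e → derivWithin f 𝕀 e = 1)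
    (hsep : ∀ x ∉ U, ∀ y ∈ U, ∃ e ∈ uIcc x y, IsFixedPt f e) (hU : IsOpen U)
    (hkf : EqOn k f U) (hk : EqOn k id Uᶜ) : ContDiffOn ℝ 1 k 𝕀 := by
  have hder := fun x (hx : x ∈ 𝕀) => hasDerivWithinAt_ite hf hfix hsep hU hkf hk hx
  rw [contDiffOn_one_iff_derivWithin (uniqueDiffOn_Icc one_pos)]
  refine ⟨fun x hx => (hder x hx).differentiableWithinAt, ?_⟩
  exact (continuousOn_ite_derivWithin hf hfix hsep hU).congr fun x hx =>
    (hder x hx).derivWithin (uniqueDiffOn_Icc one_pos x hx)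

end Gluing

namespace DiffOnIcc

variable {f k : Equiv.Perm ℝ} {J : Set (ℝ × ℝ)}

open Classical in
theorem D_eq_ite_of_eqOn_biUnion_Ioo (hf : DiffOnIcc f)
    (hfix : ∀ a ∈ 𝕀, IsFixedPt f a → D f a = 1)
    (hJ : ∀ p ∈ J, IsFixedPt f p.1 ∧ IsFixedPt f p.2)
    (hkf : EqOn k f (⋃ p ∈ J, Ioo p.1 p.2)) (hk : EqOn k id (⋃ p ∈ J, Ioo p.1 p.2)ᶜ)
    {x : ℝ} (hx : x ∈ 𝕀) : D k x = if x ∈ ⋃ p ∈ J, Ioo p.1 p.2 then D f x else 1 :=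
  (hasDerivWithinAt_ite hf.contDiffOn hfix
    (fun _ hx _ hy => exists_isFixedPt_mem_uIcc_of_notMem_biUnion_Ioo hJ hx hy)
    (isOpen_biUnion fun _ _ => isOpen_Ioo) hkf hk hx).derivWithin (uniqueDiffOn_Icc one_pos x hx)

theorem of_eqOn_biUnion_Ioo (hf : DiffOnIcc f)
    (hfix : ∀ a ∈ 𝕀, IsFixedPt f a → D f a = 1)
    (hJ : ∀ p ∈ J, p.1 ∈ 𝕀 ∧ p.2 ∈ 𝕀 ∧ IsFixedPt f p.1 ∧ IsFixedPt f p.2)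
    (hkf : EqOn k f (⋃ p ∈ J, Ioo p.1 p.2)) (hk : EqOn k id (⋃ p ∈ J, Ioo p.1 p.2)ᶜ) :
    DiffOnIcc k := by
  set U := ⋃ p ∈ J, Ioo p.1 p.2
  have hU : IsOpen U := isOpen_biUnion fun _ _ => isOpen_Ioo
  have hU𝕀 : U ⊆ 𝕀 := iUnion₂_subset fun p hp =>
    Ioo_subset_Icc_self.trans (Icc_subset_Icc (hJ p hp).1.1 (hJ p hp).2.1.2)
  have hJfix (p) (hp : p ∈ J) := (hJ p hp).2.2
  have hJfix' (p) (hp : p ∈ J) : IsFixedPt f.symm p.1 ∧ IsFixedPt f.symm p.2 :=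
    ⟨(hJfix p hp).1.equiv_symm, (hJfix p hp).2.equiv_symm⟩
  have hfix' (a) (ha : a ∈ 𝕀) (hfa : IsFixedPt f.symm a) : D f.symm a = 1 := by
    have hfa' := IsFixedPt.equiv_symm_iff.1 hfa
    simpa [hfa'.eq, hfix a ha hfa'] using hf.D_symm_apply_mul_D ha
  have hmaps' : MapsTo f.symm U U := fun x hx => by
    obtain ⟨p, hp, hxp⟩ := mem_iUnion₂.1 hx
    have hmono := hf.symm.strictMonoOn.mono (Icc_subset_Icc (hJ p hp).1.1 (hJ p hp).2.1.2)
    have hx' := hmono.mapsTo_Ioo hxp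
    rw [(hJfix' p hp).1.eq, (hJfix' p hp).2.eq] at hx'
    exact mem_biUnion hp hx'
  obtain ⟨hks, hks'⟩ := symm_eqOn_of_eqOn hmaps' hkf hk
  have hsep (x) (hx : x ∉ U) (y) (hy : y ∈ U) :=
    exists_isFixedPt_mem_uIcc_of_notMem_biUnion_Ioo hJfix hx hy
  have hsep' (x) (hx : x ∉ U) (y) (hy : y ∈ U) :=
    exists_isFixedPt_mem_uIcc_of_notMem_biUnion_Ioo hJfix' hx hy
  refine ⟨fun x hx => hk fun hxU => hx (hU𝕀 hxU), fun x hx => ?_,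
    strictMonoOn_of_eqOn_of_eqOn_compl ordConnected_Icc hf.strictMonoOn hsep hkf hk,
    contDiffOn_of_eqOn_of_eqOn_compl hf.contDiffOn hfix hsep hU hkf hk,
    contDiffOn_of_eqOn_of_eqOn_compl hf.symm.contDiffOn hfix' hsep' hU hks hks', fun x hx => ?_⟩
  · by_cases hxU : x ∈ U
    · rw [hkf hxU]
      exact hf.mapsTo hx
    · rw [hk hxU]
      exact hx
  · change 0 < D k x
    rw [hf.D_eq_ite_of_eqOn_biUnion_Ioo hfix hJfix hkf hk hx]
    split_ifs
    exacts [hf.D_pos hx, one_pos]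

end DiffOnIcc

/-- maps induced from an element of a group C¹-close to the identity
are C¹ diffeomorphisms and are led to the identity by the same conjugacies. -/
theorem stmt12 (G : Subgroup (Equiv.Perm ℝ)) (hG : ∀ g ∈ G, DiffOnIcc g)
    (h : ℕ → Equiv.Perm ℝ) (hdiff : ∀ n, DiffOnIcc (h n))
    (hconv : ∀ g ∈ G, ∀ ε > (0:ℝ), ∃ N : ℕ, ∀ n ≥ N, ∀ x ∈ Icc (0:ℝ) 1,
      |(h n * g * (h n)⁻¹) x - x| < ε ∧ |D (h n * g * (h n)⁻¹) x - 1| < ε)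
    (g : Equiv.Perm ℝ) (hgG : g ∈ G)
    (gI : Equiv.Perm ℝ) (𝓘 : Set (ℝ × ℝ)) (h𝓘 : ∀ p ∈ 𝓘, IsCompFix g p.1 p.2)
    (heq : ∀ x : ℝ, (∃ p ∈ 𝓘, x ∈ Ioo p.1 p.2) → gI x = g x)
    (hid : ∀ x : ℝ, (¬ ∃ p ∈ 𝓘, x ∈ Ioo p.1 p.2) → gI x = x) :
    DiffOnIcc gI ∧
    ∀ ε > (0:ℝ), ∃ N : ℕ, ∀ n ≥ N, ∀ x ∈ Icc (0:ℝ) 1,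
      |(h n * gI * (h n)⁻¹) x - x| < ε ∧ |D (h n * gI * (h n)⁻¹) x - 1| < ε := by
  have hg := hG g hgG
  have hfix (a) (ha : a ∈ 𝕀) (hga : IsFixedPt g a) : D g a = 1 :=
    hg.D_eq_one_of_isFixedPt hdiff (fun ε hε => (hconv g hgG ε hε).imp
      fun _ hN n hn x hx => (hN n hn x hx).2) ha hga
  set U := ⋃ p ∈ 𝓘, Ioo p.1 p.2
  have hJ (p) (hp : p ∈ 𝓘) : p.1 ∈ 𝕀 ∧ p.2 ∈ 𝕀 ∧ IsFixedPt g p.1 ∧ IsFixedPt g p.2 :=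
    let ⟨h1, h2, _, hf1, hf2, _⟩ := h𝓘 p hp; ⟨h1, h2, hf1, hf2⟩
  have hgIg : EqOn gI g U := fun x hx =>
    let ⟨p, hp, hxp⟩ := mem_iUnion₂.1 hx; heq x ⟨p, hp, hxp⟩
  have hgIid : EqOn gI id Uᶜ := fun x hx =>
    hid x fun ⟨p, hp, hxp⟩ => hx (mem_biUnion hp hxp)
  have hgI := hg.of_eqOn_biUnion_Ioo hfix hJ hgIg hgIid
  have hD (w) (hw : w ∈ 𝕀) := hg.D_eq_ite_of_eqOn_biUnion_Ioo hfix (fun p hp => (hJ p hp).2.2)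
    hgIg hgIid hw
  refine ⟨hgI, fun ε hε => (hconv g hgG ε hε).imp fun N hN n hn x hx => ?_⟩
  have hw := (hdiff n).mapsTo_symm hx
  by_cases hwU : (h n).symm x ∈ U
  · have hval : (h n * gI * (h n)⁻¹) x = (h n * g * (h n)⁻¹) x :=
      congrArg (h n) (hgIg hwU)
    rw [hval, (hdiff n).D_conj hgI hx, hgIg hwU, hD _ hw, if_pos hwU, ← (hdiff n).D_conj hg hx]
    exact hN n hn x hx
  · have hval : (h n * gI * (h n)⁻¹) x = x :=
      (congrArg (h n) (hgIid hwU)).trans ((h n).apply_symm_apply x)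
    rw [hval, (hdiff n).D_conj hgI hx, hgIid hwU, hD _ hw, if_neg hwU, mul_one, id,
      (hdiff n).D_apply_symm_mul_D_symm hx]
    simpa using hε
end
end

section
/- Let G ⊂ Diff^1_+([0,1]) be a group without hyperbolic fixed points and let h be induced from some g ∈ G (i.e., h(x) ∈ {x, g(x)} for all x, and h is the identity off a union of components of [0,1]∖Fix(g)). Then h is a C^1 diffeomorphism without hyperbolic fixed points. -/
open Set Filter

noncomputable section

/-! Let `U` be the union of the chosen components. The map `h` agrees with `g` on the open set `U`
and with the identity off it, so its candidate derivative is `Dg` on `U` and `1` off `U`. Only the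
frontier of `U` needs an argument: its points are limits of endpoints of components, hence fixed by
`g`, so `Dg = 1` there since `G` has no hyperbolic fixed points. At such a point the increments of
`h - id` are dominated by those of `g - id`, so `h` has derivative `1` there, and the candidate
derivative is continuous because `Dg → 1`. The inverse `h⁻¹` is induced in the same way by
`g⁻¹ ∈ G`, so it is `C¹` as well. -/

section Patching

variable {f φ f' : ℝ → ℝ} {s U : Set ℝ} {x : ℝ}

theorem hasDerivWithinAt_one_of_eqOn_id_compl (hφf : EqOn φ f U) (hφ : EqOn φ id Uᶜ)
    (hx : x ∉ U) (hfx : f x = x) (hf : HasDerivWithinAt f 1 s x) :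
    HasDerivWithinAt φ 1 s x := by
  rw [hasDerivWithinAt_iff_isLittleO] at hf ⊢
  refine (Asymptotics.isBigO_of_le _ fun y => ?_).trans_isLittleO hf
  rw [hφ hx, hfx]
  by_cases hy : y ∈ U
  · rw [hφf hy]
    rfl
  · simp [hφ hy]

theorem hasDerivWithinAt_of_eqOn_id_compl [DecidablePred (· ∈ U)] (hU : IsOpen U)
    (hφf : EqOn φ f U) (hφ : EqOn φ id Uᶜ) (hf : ∀ x ∈ s, HasDerivWithinAt f (f' x) s x)
    (hfr : ∀ x ∈ s ∩ frontier U, f x = x ∧ f' x = 1) (hx : x ∈ s) :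
    HasDerivWithinAt φ (U.piecewise f' 1 x) s x := by
  by_cases hxU : x ∈ U
  · rw [piecewise_eq_of_mem _ _ _ hxU]
    exact (hf x hx).congr_of_eventuallyEq
      (eventuallyEq_of_mem (nhdsWithin_le_nhds (hU.mem_nhds hxU)) hφf) (hφf hxU)
  rw [piecewise_eq_of_notMem _ _ _ hxU, Pi.one_apply]
  by_cases hxf : x ∈ frontier U
  · obtain ⟨hfx, hf'x⟩ := hfr x ⟨hx, hxf⟩
    exact hasDerivWithinAt_one_of_eqOn_id_compl hφf hφ hxU hfx (hf'x ▸ hf x hx)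
  · have hxc : x ∉ closure U := fun hc => hxf (hU.frontier_eq ▸ ⟨hc, hxU⟩)
    exact (hasDerivWithinAt_id x s).congr_of_eventuallyEq
      (eventuallyEq_of_mem (nhdsWithin_le_nhds (isClosed_closure.isOpen_compl.mem_nhds hxc))
        (hφ.mono (compl_subset_compl.2 subset_closure))) (hφ hxU)

theorem contDiffOn_and_derivWithin_of_eqOn_id_compl [DecidablePred (· ∈ U)] (hs : UniqueDiffOn ℝ s)
    (hU : IsOpen U) (hφf : EqOn φ f U) (hφ : EqOn φ id Uᶜ) (hf : ContDiffOn ℝ 1 f s)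
    (hfr : ∀ x ∈ s ∩ frontier U, f x = x ∧ derivWithin f s x = 1) :
    ContDiffOn ℝ 1 φ s ∧ EqOn (derivWithin φ s) (U.piecewise (derivWithin f s) 1) s := by
  have hderiv : ∀ x ∈ s, HasDerivWithinAt φ (U.piecewise (derivWithin f s) 1 x) s x :=
    fun x => hasDerivWithinAt_of_eqOn_id_compl hU hφf hφ
      (fun y hy => ((hf.differentiableOn one_ne_zero) y hy).hasDerivWithinAt) hfr
  have hD : EqOn (derivWithin φ s) (U.piecewise (derivWithin f s) 1) s :=
    fun x hx => (hderiv x hx).derivWithin (hs x hx)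
  refine ⟨(contDiffOn_one_iff_derivWithin hs).2
    ⟨fun x hx => (hderiv x hx).differentiableWithinAt, ContinuousOn.congr ?_ hD⟩, hD⟩
  exact ContinuousOn.piecewise (fun x hx => (hfr x hx).2)
    ((hf.continuousOn_derivWithin hs le_rfl).mono inter_subset_left) continuousOn_const

end Patching

def iUnionIoo (𝓘 : Set (ℝ × ℝ)) : Set ℝ := ⋃ p ∈ 𝓘, Ioo p.1 p.2

section iUnionIoo

variable {𝓘 : Set (ℝ × ℝ)} {f φ : ℝ → ℝ} {s : Set ℝ} {x : ℝ}

theorem mem_iUnionIoo : x ∈ iUnionIoo 𝓘 ↔ ∃ p ∈ 𝓘, x ∈ Ioo p.1 p.2 := by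
  simp only [iUnionIoo, mem_iUnion, exists_prop]

theorem isOpen_iUnionIoo : IsOpen (iUnionIoo 𝓘) :=
  isOpen_biUnion fun _ _ => isOpen_Ioo

theorem frontier_iUnionIoo_subset :
    frontier (iUnionIoo 𝓘) ⊆ closure (Prod.fst '' 𝓘 ∪ Prod.snd '' 𝓘) := by
  intro x hx
  rw [isOpen_iUnionIoo.frontier_eq] at hx
  obtain ⟨hxc, hxU⟩ := hx
  rw [Metric.mem_closure_iff] at hxc ⊢
  intro ε hε
  obtain ⟨y, hyU, hxy⟩ := hxc ε hε
  obtain ⟨p, hp, hy⟩ := mem_iUnionIoo.1 hyU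
  have hxp : x ∉ Ioo p.1 p.2 := fun h => hxU (mem_iUnionIoo.2 ⟨p, hp, h⟩)
  rcases le_or_gt x p.1 with hxa | hax
  · exact ⟨p.1, Or.inl ⟨p, hp, rfl⟩,
      (Real.dist_left_le_of_mem_uIcc (mem_uIcc_of_le hxa hy.1.le)).trans_lt hxy⟩
  · have hbx : p.2 ≤ x := not_lt.1 fun h => hxp ⟨hax, h⟩
    exact ⟨p.2, Or.inr ⟨p, hp, rfl⟩,
      (Real.dist_left_le_of_mem_uIcc (mem_uIcc_of_ge hy.2.le hbx)).trans_lt hxy⟩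

theorem mapsTo_iUnionIoo (hf : ∀ p ∈ 𝓘, MapsTo f (Ioo p.1 p.2) (Ioo p.1 p.2)) :
    MapsTo f (iUnionIoo 𝓘) (iUnionIoo 𝓘) := fun x hx => by
  obtain ⟨p, hp, hxp⟩ := mem_iUnionIoo.1 hx
  exact mem_iUnionIoo.2 ⟨p, hp, hf p hp hxp⟩

theorem strictMonoOn_of_eqOn_id_compl (hf : StrictMonoOn f s) (hs : iUnionIoo 𝓘 ⊆ s)
    (hmaps : ∀ p ∈ 𝓘, MapsTo f (Ioo p.1 p.2) (Ioo p.1 p.2))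
    (hφf : EqOn φ f (iUnionIoo 𝓘)) (hφ : EqOn φ id (iUnionIoo 𝓘)ᶜ) : StrictMonoOn φ s := by
  intro x hx y hy hxy
  by_cases hxU : x ∈ iUnionIoo 𝓘 <;> by_cases hyU : y ∈ iUnionIoo 𝓘
  · rw [hφf hxU, hφf hyU]
    exact hf (hs hxU) (hs hyU) hxy
  · obtain ⟨p, hp, hxp⟩ := mem_iUnionIoo.1 hxU
    have hby : p.2 ≤ y :=
      not_lt.1 fun h => hyU (mem_iUnionIoo.2 ⟨p, hp, hxp.1.trans hxy, h⟩)
    rw [hφf hxU, hφ hyU]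
    exact (hmaps p hp hxp).2.trans_le hby
  · obtain ⟨p, hp, hyp⟩ := mem_iUnionIoo.1 hyU
    have hxa : x ≤ p.1 :=
      not_lt.1 fun h => hxU (mem_iUnionIoo.2 ⟨p, hp, h, hxy.trans hyp.2⟩)
    rw [hφ hxU, hφf hyU]
    exact hxa.trans_lt (hmaps p hp hyp).1
  · rw [hφ hxU, hφ hyU]
    exact hxy

end iUnionIoo

theorem Equiv.eqOn_symm_of_eqOn {α : Type*} {e f : α ≃ α} {U : Set α} (hef : EqOn e f U)
    (hU : MapsTo f.symm U U) : EqOn e.symm f.symm U := fun x hx =>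
  e.symm_apply_eq.2 (by rw [hef (hU hx), f.apply_symm_apply])

theorem Equiv.eqOn_symm_id {α : Type*} {e : α ≃ α} {U : Set α} (he : EqOn e id U) :
    EqOn e.symm id U := fun _ hx => e.symm_apply_eq.2 (he hx).symm

namespace IsCompFix

variable {f : Equiv.Perm ℝ} {a b : ℝ}

theorem Ioo_subset (h : IsCompFix f a b) : Ioo a b ⊆ Icc 0 1 :=
  Ioo_subset_Icc_self.trans (Icc_subset_Icc h.1.1 h.2.1.2)

theorem mapsTo_Ioo (hf : StrictMonoOn f (Icc 0 1)) (h : IsCompFix f a b) :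
    MapsTo f (Ioo a b) (Ioo a b) := by
  intro x hx
  have hxs : x ∈ Icc (0:ℝ) 1 := h.Ioo_subset hx
  obtain ⟨ha, hb, -, hfa, hfb, -⟩ := h
  exact ⟨hfa ▸ hf ha hxs hx.1, hfb ▸ hf hxs hb hx.2⟩

theorem symm (h : IsCompFix f a b) : IsCompFix f.symm a b := by
  obtain ⟨ha, hb, hab, hfa, hfb, hne⟩ := h
  exact ⟨ha, hb, hab, f.symm_apply_eq.2 hfa.symm, f.symm_apply_eq.2 hfb.symm,
    fun x hx hfx => hne x hx (f.symm_apply_eq.1 hfx).symm⟩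

end IsCompFix

theorem frontier_iUnionIoo_subset_fixedPoints {f : Equiv.Perm ℝ} {𝓘 : Set (ℝ × ℝ)}
    (hf : ContinuousOn f (Icc 0 1)) (h𝓘 : ∀ p ∈ 𝓘, IsCompFix f p.1 p.2) :
    frontier (iUnionIoo 𝓘) ⊆ {x ∈ Icc 0 1 | f x = x} := by
  refine frontier_iUnionIoo_subset.trans
    (closure_minimal ?_ (isClosed_Icc.isClosed_eq hf continuousOn_id))
  rintro _ (⟨p, hp, rfl⟩ | ⟨p, hp, rfl⟩)
  exacts [⟨(h𝓘 p hp).1, (h𝓘 p hp).2.2.2.1⟩, ⟨(h𝓘 p hp).2.1, (h𝓘 p hp).2.2.2.2.1⟩]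

open Classical in
theorem contDiffOn_and_D_of_induced {g h : Equiv.Perm ℝ} {𝓘 : Set (ℝ × ℝ)}
    (hg : ContDiffOn ℝ 1 g (Icc 0 1)) (hfix : ∀ x ∈ Icc (0:ℝ) 1, g x = x → D g x = 1)
    (h𝓘 : ∀ p ∈ 𝓘, IsCompFix g p.1 p.2)
    (hhg : EqOn h g (iUnionIoo 𝓘)) (hhid : EqOn h id (iUnionIoo 𝓘)ᶜ) :
    ContDiffOn ℝ 1 h (Icc 0 1) ∧ EqOn (D h) ((iUnionIoo 𝓘).piecewise (D g) 1) (Icc 0 1) :=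
  contDiffOn_and_derivWithin_of_eqOn_id_compl uniqueDiffOn_Icc_zero_one isOpen_iUnionIoo hhg hhid hg
    fun x ⟨hx, hxf⟩ =>
      have hgx := (frontier_iUnionIoo_subset_fixedPoints hg.continuousOn h𝓘 hxf).2
      ⟨hgx, hfix x hx hgx⟩

/-- a map induced from an element of a group without hyperbolic
fixed points is a C¹ diffeomorphism without hyperbolic fixed points. -/
theorem stmt13 (G : Subgroup (Equiv.Perm ℝ)) (hG : ∀ g ∈ G, DiffOnIcc g)
    (hnh : ∀ g ∈ G, ∀ x ∈ Icc (0:ℝ) 1, g x = x → D g x = 1)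
    (g : Equiv.Perm ℝ) (hgG : g ∈ G)
    (h : Equiv.Perm ℝ) (𝓘 : Set (ℝ × ℝ)) (h𝓘 : ∀ p ∈ 𝓘, IsCompFix g p.1 p.2)
    (heq : ∀ x : ℝ, (∃ p ∈ 𝓘, x ∈ Ioo p.1 p.2) → h x = g x)
    (hid : ∀ x : ℝ, (¬ ∃ p ∈ 𝓘, x ∈ Ioo p.1 p.2) → h x = x) :
    DiffOnIcc h ∧ ∀ x ∈ Icc (0:ℝ) 1, h x = x → D h x = 1 := by
  classical
  set U := iUnionIoo 𝓘
  have hhg : EqOn h g U := fun x hx => heq x (mem_iUnionIoo.1 hx)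
  have hhid : EqOn h id Uᶜ := fun x hx => hid x (mt mem_iUnionIoo.2 hx)
  have hUs : U ⊆ Icc 0 1 := iUnion₂_subset fun p hp => (h𝓘 p hp).Ioo_subset
  obtain ⟨-, -, hgmono, hgC1, hgsymmC1, hgpos⟩ := hG g hgG
  have hgsymmmono : StrictMonoOn g.symm (Icc 0 1) := (hG g⁻¹ (inv_mem hgG)).2.2.1
  have hmaps : ∀ p ∈ 𝓘, MapsTo g (Ioo p.1 p.2) (Ioo p.1 p.2) :=
    fun p hp => (h𝓘 p hp).mapsTo_Ioo hgmono
  obtain ⟨hhC1, hDh⟩ := contDiffOn_and_D_of_induced hgC1 (hnh g hgG) h𝓘 hhg hhid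
  obtain ⟨hhsymmC1, -⟩ := contDiffOn_and_D_of_induced hgsymmC1 (hnh g⁻¹ (inv_mem hgG))
    (fun p hp => (h𝓘 p hp).symm)
    (Equiv.eqOn_symm_of_eqOn hhg
      (mapsTo_iUnionIoo fun p hp => (h𝓘 p hp).symm.mapsTo_Ioo hgsymmmono))
    (Equiv.eqOn_symm_id hhid)
  refine ⟨⟨fun x hx => hhid fun hxU => hx (hUs hxU),
    fun x hx => ?_, strictMonoOn_of_eqOn_id_compl hgmono hUs hmaps hhg hhid,
    hhC1, hhsymmC1, fun x hx => ?_⟩, fun x hx hhx => ?_⟩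
  · by_cases hxU : x ∈ U
    · exact hUs (hhg hxU ▸ mapsTo_iUnionIoo hmaps hxU)
    · exact hhid hxU ▸ hx
  · rw [← D, hDh hx]
    by_cases hxU : x ∈ U
    · rw [piecewise_eq_of_mem _ _ _ hxU]
      exact hgpos x hx
    · rw [piecewise_eq_of_notMem _ _ _ hxU]
      exact one_pos
  · have hxU : x ∉ U := fun hxU => by
      obtain ⟨p, hp, hxp⟩ := mem_iUnionIoo.1 hxU
      exact (h𝓘 p hp).2.2.2.2.2 x hxp (hhg hxU ▸ hhx)
    rw [hDh hx, piecewise_eq_of_notMem _ _ _ hxU, Pi.one_apply]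
end
end
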